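/- Suppose g satisfies the hard-core assumptions with constant a = c < 1, and define r(m,n) = sup_{(x₁,…,xₘ)} sup_{Y₁,…,Yₙ ∈ C} ∑_{y₁∈Y₁}⋯∑_{yₙ∈Yₙ} |φ̃_{(x₁,…,xₘ)}(y₁,…,yₙ)|. Then there exists a constant q₁ (depending only on c and the dimension) such that r(m,n) ≤ n! · q₁^{m+n} for all m, n. -/

import Mathlib

open Finset Metric

noncomputable section

def subseqVals {d n : ℕ} (Y : Fin n → EuclideanSpace ℝ (Fin d)) (S : Finset (Fin n)) :
    Fin S.card → EuclideanSpace ℝ (Fin d) :=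
  fun i => Y ((S.orderIsoOfFin rfl i : Fin n))

open Real
open scoped Nat

/-! Induction on the total number of points `m + n`, which the recurrence lowers by one.
If two points of `X` are closer than `1`, `φ̃_X` vanishes: either some `g (xᵢ - x₁) = -1` kills
the prefactor, or the close pair survives into every term of the recurrence. Otherwise the
points `xᵢ - x₁` form a configuration of `C₀`, so the prefactor is at most `e^c`. Summing the
recurrence over `y`, each coordinate moved into `Z` costs at most `D = N + c`, where `N` bounds
the number of points of a `1`-separated set in a unit ball, and the others are handled by
induction; `∑_{Z ⊆ Y} D^|Z| (n - |Z|)! ≤ n! e^D` then gives `q₁ = e^(2c + N)`. -/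

section

variable {E : Type*} [NormedAddCommGroup E]

theorem packingNumber_ne_top_of_isCompact {X : Type*} [PseudoEMetricSpace X] {ε : NNReal}
    (hε : ε ≠ 0) {A : Set X} (hA : IsCompact A) : packingNumber ε A ≠ ⊤ := by
  obtain ⟨C, -, hC, hcover⟩ := exists_finite_isCover_of_isCompact (half_pos hε.bot_lt).ne' hA
  have := (packingNumber_two_mul_le_externalCoveringNumber (ε / 2) A).trans
    hcover.externalCoveringNumber_le_encard
  rw [mul_div_cancel₀ ε two_ne_zero] at this
  exact ne_top_of_le_ne_top hC.encard_lt_top.ne this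

theorem card_filter_dist_lt_le_packingNumber {Y : Finset E}
    (hY : (Y : Set E).Pairwise (1 ≤ dist · ·)) (x : E) :
    (#{y ∈ Y | dist y x < 1} : ℕ∞) ≤ packingNumber 2⁻¹ (closedBall (0 : E) 1) := by
  -- `IsSeparated ε` asks for `ε < edist`, so a `1`-separated set is only `2⁻¹`-separated.
  classical
  have hinj : Set.InjOn (· - x) (Y : Set E) := fun _ _ _ _ h => sub_left_injective h
  calc (#{y ∈ Y | dist y x < 1} : ℕ∞)
      = (({y ∈ Y | dist y x < 1}.image (· - x) : Finset E) : Set E).encard := by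
        rw [Set.encard_coe_eq_coe_finsetCard,
          card_image_of_injOn (hinj.mono (coe_subset.2 (filter_subset _ _)))]
    _ ≤ _ := by
      apply IsSeparated.encard_le_packingNumber
      · intro z hz
        simp only [coe_image, coe_filter, Set.mem_image, Set.mem_ofPred_eq] at hz
        obtain ⟨y, ⟨-, hy⟩, rfl⟩ := hz
        simpa [dist_eq_norm] using hy.le
      · intro z hz w hw hzw
        simp only [coe_image, coe_filter, Set.mem_image, Set.mem_ofPred_eq] at hz hw
        obtain ⟨y, ⟨hy, -⟩, rfl⟩ := hz
        obtain ⟨y', ⟨hy', -⟩, rfl⟩ := hw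
        have h1 : (1 : ℝ) ≤ dist y y' := hY hy hy' (fun h => hzw (by rw [h]))
        rw [edist_dist, dist_sub_right, ENNReal.coe_inv two_ne_zero, ENNReal.coe_ofNat,
          ← ENNReal.ofReal_ofNat, ← ENNReal.ofReal_inv_of_pos two_pos]
        exact (ENNReal.ofReal_lt_ofReal_iff (by linarith)).2 (by linarith)

theorem exists_card_filter_dist_lt_le [ProperSpace E] :
    ∃ N : ℕ, ∀ Y : Finset E, (Y : Set E).Pairwise (1 ≤ dist · ·) →
      ∀ x, #{y ∈ Y | dist y x < 1} ≤ N := by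
  have h := packingNumber_ne_top_of_isCompact (ε := 2⁻¹) (by norm_num)
    (isCompact_closedBall (0 : E) 1)
  refine ⟨(packingNumber 2⁻¹ (closedBall (0 : E) 1)).toNat, fun Y hY x => ?_⟩
  have := card_filter_dist_lt_le_packingNumber hY x
  rw [← ENat.natCast_toNat h] at this
  exact_mod_cast this

theorem sum_abs_comp_sub_le_of_one_le_dist {g : E → ℝ} {c : ℝ}
    (hsum : ∀ X : Finset E, (∀ x ∈ X, 1 ≤ ‖x‖) → (X : Set E).Pairwise (1 ≤ dist · ·) →
      ∑ x ∈ X, |g x| ≤ c)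
    {T : Finset E} (hT : (T : Set E).Pairwise (1 ≤ dist · ·)) {x₀ : E}
    (hfar : ∀ y ∈ T, 1 ≤ dist y x₀) :
    ∑ y ∈ T, |g (y - x₀)| ≤ c := by
  classical
  rw [← sum_image (f := fun z => |g z|) fun _ _ _ _ h => sub_left_injective h]
  apply hsum
  · simpa [← dist_eq_norm] using hfar
  · intro z hz w hw hne
    obtain ⟨y, hy, rfl⟩ := mem_image.1 hz
    obtain ⟨y', hy', rfl⟩ := mem_image.1 hw
    simpa using hT hy hy' (fun h => hne (by rw [h]))

theorem sum_abs_comp_sub_le {g : E → ℝ} {c : ℝ} {N : ℕ}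
    (hball : ∀ x, ‖x‖ < 1 → g x = -1)
    (hsum : ∀ X : Finset E, (∀ x ∈ X, 1 ≤ ‖x‖) → (X : Set E).Pairwise (1 ≤ dist · ·) →
      ∑ x ∈ X, |g x| ≤ c)
    (hN : ∀ Y : Finset E, (Y : Set E).Pairwise (1 ≤ dist · ·) →
      ∀ x, #{y ∈ Y | dist y x < 1} ≤ N)
    {Y : Finset E} (hY : (Y : Set E).Pairwise (1 ≤ dist · ·)) (x₀ : E) :
    ∑ y ∈ Y, |g (y - x₀)| ≤ N + c := by
  classical
  rw [← sum_filter_add_sum_filter_not Y (dist · x₀ < 1)]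
  gcongr
  · calc ∑ y ∈ Y with dist y x₀ < 1, |g (y - x₀)|
        ≤ #{y ∈ Y | dist y x₀ < 1} • (1 : ℝ) := by
          refine sum_le_card_nsmul _ _ _ fun y hy => ?_
          rw [hball _ (by simpa [← dist_eq_norm] using (mem_filter.1 hy).2)]
          norm_num
      _ ≤ N := by simpa using hN Y hY x₀
  · refine sum_abs_comp_sub_le_of_one_le_dist hsum
      (hY.mono (coe_subset.2 (filter_subset _ _))) fun y hy => ?_
    simpa using (mem_filter.1 hy).2

theorem abs_prod_add_one_le_exp {g : E → ℝ} {c : ℝ}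
    (hsum : ∀ X : Finset E, (∀ x ∈ X, 1 ≤ ‖x‖) → (X : Set E).Pairwise (1 ≤ dist · ·) →
      ∑ x ∈ X, |g x| ≤ c)
    {m : ℕ} (Z : Fin m → E) (hZ : Pairwise fun i j => 1 ≤ dist (Z i) (Z j)) (x₀ : E)
    (hfar : ∀ k, 1 ≤ dist (Z k) x₀) :
    |∏ k, (g (Z k - x₀) + 1)| ≤ exp c := by
  classical
  have hinj : Function.Injective Z := fun i j h => by
    by_contra hne
    have : 1 ≤ dist (Z i) (Z j) := hZ hne
    rw [h, dist_self] at this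
    linarith
  have hsumZ : ∑ k, |g (Z k - x₀)| ≤ c := by
    rw [← sum_image (f := fun y => |g (y - x₀)|) hinj.injOn]
    refine sum_abs_comp_sub_le_of_one_le_dist hsum ?_ (by simpa using hfar)
    intro y hy y' hy' hne
    obtain ⟨i, -, rfl⟩ := mem_image.1 hy
    obtain ⟨j, -, rfl⟩ := mem_image.1 hy'
    exact hZ fun h => hne (by rw [h])
  calc |∏ k, (g (Z k - x₀) + 1)|
      = ∏ k, |g (Z k - x₀) + 1| := abs_prod _ _
    _ ≤ ∏ k, exp |g (Z k - x₀)| := by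
        refine prod_le_prod (fun _ _ => abs_nonneg _) fun k _ => ?_
        calc |g (Z k - x₀) + 1| ≤ |g (Z k - x₀)| + 1 := by simpa using abs_add_le _ (1 : ℝ)
          _ ≤ exp |g (Z k - x₀)| := add_one_le_exp _
    _ = exp (∑ k, |g (Z k - x₀)|) := (exp_sum _ _).symm
    _ ≤ exp c := exp_le_exp.2 hsumZ

end

section

variable {α : Type*} {n : ℕ}

theorem Finset.prod_orderIsoOfFin {M : Type*} [CommMonoid M] (S : Finset (Fin n))
    (f : Fin n → M) : ∏ i, f (S.orderIsoOfFin rfl i) = ∏ j ∈ S, f j :=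
  ((S.orderIsoOfFin rfl).bijective.prod_comp fun j : S => f j).trans (prod_coe_sort S f)

theorem sum_piFinset_eq_sum_sum_orderIsoOfFin {β : Type*} [AddCommMonoid β]
    (Y : Fin n → Finset α) (S : Finset (Fin n)) (F : (Fin #S → α) → (Fin #Sᶜ → α) → β) :
    ∑ y ∈ Fintype.piFinset Y,
        F (fun i => y (S.orderIsoOfFin rfl i)) (fun i => y (Sᶜ.orderIsoOfFin rfl i)) =
      ∑ u ∈ Fintype.piFinset (fun i => Y (S.orderIsoOfFin rfl i)),
        ∑ v ∈ Fintype.piFinset (fun i => Y (Sᶜ.orderIsoOfFin rfl i)), F u v := by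
  rw [← sum_product']
  let e := finSumEquivOfFinset (s := S) rfl rfl
  refine sum_equiv ((e.arrowCongr (Equiv.refl α)).symm.trans
    (Equiv.sumArrowEquivProdArrow _ _ _)) (fun y => ?_) (fun y _ => ?_)
  · simp only [mem_product, Fintype.mem_piFinset]
    rw [← e.forall_congr_right, Sum.forall]
    rfl
  · rfl

theorem sum_pow_card_mul_factorial_le (n : ℕ) {D : ℝ} (hD : 0 ≤ D) :
    ∑ S : Finset (Fin n), D ^ #S * ((n - #S)! : ℝ) ≤ n ! * exp D := by
  rw [← powerset_univ, sum_powerset_apply_card (fun k => D ^ k * ((n - k)! : ℝ)), card_univ,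
    Fintype.card_fin]
  calc ∑ k ∈ range (n + 1), n.choose k • (D ^ k * ((n - k)! : ℝ))
      = n ! * ∑ k ∈ range (n + 1), D ^ k / k ! := by
        rw [mul_sum]
        refine sum_congr rfl fun k hk => ?_
        rw [nsmul_eq_mul, Nat.cast_choose ℝ (Nat.lt_succ_iff.1 (mem_range.1 hk))]
        field_simp
    _ ≤ n ! * exp D := by
        gcongr
        exact sum_le_exp_of_nonneg hD _

theorem sum_prod_abs_mul_abs_le (Y : Fin n → Finset α) (S : Finset (Fin n))
    {w : α → ℝ} {D : ℝ} (hw : ∀ j, ∑ y ∈ Y j, |w y| ≤ D)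
    {F : (Fin #S → α) → (Fin #Sᶜ → α) → ℝ} {B : ℝ} (hB : 0 ≤ B)
    (hF : ∀ u, ∑ v ∈ Fintype.piFinset (fun i => Y (Sᶜ.orderIsoOfFin rfl i)), |F u v| ≤ B) :
    ∑ y ∈ Fintype.piFinset Y, (∏ j ∈ S, |w (y j)|) *
        |F (fun i => y (S.orderIsoOfFin rfl i)) (fun i => y (Sᶜ.orderIsoOfFin rfl i))| ≤
      D ^ #S * B := by
  calc _ = ∑ u ∈ Fintype.piFinset (fun i => Y (S.orderIsoOfFin rfl i)),
          ∑ v ∈ Fintype.piFinset (fun i => Y (Sᶜ.orderIsoOfFin rfl i)),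
            (∏ i, |w (u i)|) * |F u v| := by
        rw [← sum_piFinset_eq_sum_sum_orderIsoOfFin]
        refine sum_congr rfl fun y _ => ?_
        rw [← prod_orderIsoOfFin S]
    _ ≤ ∑ u ∈ Fintype.piFinset (fun i => Y (S.orderIsoOfFin rfl i)), (∏ i, |w (u i)|) * B := by
        gcongr with u
        rw [← mul_sum]
        gcongr
        exact hF u
    _ = (∏ i, ∑ z ∈ Y (S.orderIsoOfFin rfl i), |w z|) * B := by
        rw [← sum_mul, prod_univ_sum]
    _ ≤ D ^ #S * B := by
        gcongr
        exact (prod_le_prod (fun _ _ => sum_nonneg fun _ _ => abs_nonneg _)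
          fun i _ => hw _).trans_eq (by simp)

end

section Recurrence

variable {d : ℕ} {g : EuclideanSpace ℝ (Fin d) → ℝ}
  {phiT : ∀ m : ℕ, (Fin m → EuclideanSpace ℝ (Fin d)) →
    ∀ n : ℕ, (Fin n → EuclideanSpace ℝ (Fin d)) → ℝ}

variable (g phiT) in
structure IsPhiTilde : Prop where
  zero : ∀ (X : Fin 0 → EuclideanSpace ℝ (Fin d)) (n : ℕ) (Y : Fin n → EuclideanSpace ℝ (Fin d)),
    phiT 0 X n Y = if n = 0 then 1 else 0
  succ : ∀ (m : ℕ) (X : Fin (m + 1) → EuclideanSpace ℝ (Fin d)) (n : ℕ)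
      (Y : Fin n → EuclideanSpace ℝ (Fin d)),
    phiT (m + 1) X n Y =
      (∏ i : Fin m, (g (X i.succ - X 0) + 1)) *
        ∑ S : Finset (Fin n),
          (∏ j ∈ S, g (Y j - X 0)) *
            phiT (S.card + m) (Fin.append (subseqVals Y S) (Fin.tail X))
              Sᶜ.card (subseqVals Y Sᶜ)

theorem IsPhiTilde.eq_zero_of_not_pairwise (hφ : IsPhiTilde g phiT)
    (hball : ∀ x, ‖x‖ < 1 → g x = -1) {m n : ℕ} (X : Fin m → EuclideanSpace ℝ (Fin d))
    (Y : Fin n → EuclideanSpace ℝ (Fin d)) (hX : ¬Pairwise fun i j => 1 ≤ dist (X i) (X j)) :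
    phiT m X n Y = 0 := by
  cases m with
  | zero => exact absurd Subsingleton.pairwise hX
  | succ m =>
    rw [hφ.succ]
    have hclose (k : Fin m) (hk : dist (X k.succ) (X 0) < 1) :
        ∏ i : Fin m, (g (X i.succ - X 0) + 1) = 0 :=
      prod_eq_zero (mem_univ k) (by rw [hball _ (by rwa [← dist_eq_norm]), neg_add_cancel])
    simp only [pairwise_fin_succ_iff, not_and_or, not_forall, not_le] at hX
    rcases hX with ⟨k, hk⟩ | ⟨k, hk⟩ | htail
    · rw [hclose k hk, zero_mul]
    · rw [hclose k (by rwa [dist_comm]), zero_mul]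
    · refine mul_eq_zero_of_right _ (sum_eq_zero fun S _ => mul_eq_zero_of_right _ ?_)
      refine hφ.eq_zero_of_not_pairwise hball _ _ fun h => htail ?_
      intro a b hab
      simpa only [Fin.append_right, Fin.tail] using h ((Fin.natAdd_injective m #S).ne hab)
termination_by m + n
decreasing_by
  have := S.card_add_card_compl
  rw [Fintype.card_fin] at this
  omega

theorem IsPhiTilde.abs_succ_le (hφ : IsPhiTilde g phiT) {c : ℝ}
    (hsum : ∀ X : Finset (EuclideanSpace ℝ (Fin d)), (∀ x ∈ X, 1 ≤ ‖x‖) →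
      (X : Set (EuclideanSpace ℝ (Fin d))).Pairwise (1 ≤ dist · ·) → ∑ x ∈ X, |g x| ≤ c)
    {m n : ℕ} (X : Fin (m + 1) → EuclideanSpace ℝ (Fin d))
    (hX : Pairwise fun i j => 1 ≤ dist (X i) (X j)) (Y : Fin n → EuclideanSpace ℝ (Fin d)) :
    |phiT (m + 1) X n Y| ≤
      exp c * ∑ S : Finset (Fin n), (∏ j ∈ S, |g (Y j - X 0)|) *
        |phiT (#S + m) (Fin.append (subseqVals Y S) (Fin.tail X)) #Sᶜ (subseqVals Y Sᶜ)| := by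
  obtain ⟨hfar, -, htail⟩ := pairwise_fin_succ_iff.1 hX
  rw [hφ.succ, abs_mul]
  gcongr
  · exact abs_prod_add_one_le_exp hsum (Fin.tail X) htail (X 0) hfar
  · refine (abs_sum_le_sum_abs _ _).trans_eq (sum_congr rfl fun S _ => ?_)
    rw [abs_mul, abs_prod]

theorem IsPhiTilde.sum_abs_le (hφ : IsPhiTilde g phiT) (hball : ∀ x, ‖x‖ < 1 → g x = -1)
    {c : ℝ} (hsum : ∀ X : Finset (EuclideanSpace ℝ (Fin d)), (∀ x ∈ X, 1 ≤ ‖x‖) →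
      (X : Set (EuclideanSpace ℝ (Fin d))).Pairwise (1 ≤ dist · ·) → ∑ x ∈ X, |g x| ≤ c)
    {D : ℝ} (hD : 0 ≤ D) {m n : ℕ} (X : Fin m → EuclideanSpace ℝ (Fin d))
    (Y : Fin n → Finset (EuclideanSpace ℝ (Fin d))) (hY : ∀ j x, ∑ y ∈ Y j, |g (y - x)| ≤ D) :
    ∑ y ∈ Fintype.piFinset Y, |phiT m X n y| ≤ n ! * exp (c + D) ^ (m + n) := by
  cases m with
  | zero =>
    simp only [hφ.zero]
    rcases n with _ | n
    · simp
    · simp only [Nat.add_one_ne_zero, if_false, abs_zero, sum_const_zero]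
      positivity
  | succ m =>
    by_cases hX : Pairwise fun i j => 1 ≤ dist (X i) (X j)
    swap
    · simp only [hφ.eq_zero_of_not_pairwise hball X _ hX, abs_zero, sum_const_zero]
      positivity
    have hS (S : Finset (Fin n)) : ∑ y ∈ Fintype.piFinset Y, (∏ j ∈ S, |g (y j - X 0)|) *
          |phiT (#S + m) (Fin.append (subseqVals y S) (Fin.tail X)) #Sᶜ (subseqVals y Sᶜ)| ≤
        D ^ #S * ((n - #S)! * exp (c + D) ^ (m + n)) := by
      have hcard := S.card_add_card_compl
      rw [Fintype.card_fin] at hcard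
      refine sum_prod_abs_mul_abs_le Y S (fun j => hY j (X 0))
        (F := fun u v => phiT (#S + m) (Fin.append u (Fin.tail X)) #Sᶜ v) (by positivity)
        fun u => ?_
      refine (hφ.sum_abs_le hball hsum hD (Fin.append u (Fin.tail X)) _ fun j => hY _).trans_eq ?_
      rw [show #Sᶜ = n - #S by omega, show #S + m + (n - #S) = m + n by omega]
    calc ∑ y ∈ Fintype.piFinset Y, |phiT (m + 1) X n y|
        ≤ ∑ y ∈ Fintype.piFinset Y, exp c * ∑ S : Finset (Fin n), (∏ j ∈ S, |g (y j - X 0)|) *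
            |phiT (#S + m) (Fin.append (subseqVals y S) (Fin.tail X)) #Sᶜ (subseqVals y Sᶜ)| :=
          sum_le_sum fun y _ => hφ.abs_succ_le hsum X hX y
      _ ≤ exp c * ∑ S : Finset (Fin n), D ^ #S * ((n - #S)! * exp (c + D) ^ (m + n)) := by
          rw [← mul_sum, sum_comm]
          gcongr with S
          exact hS S
      _ = exp c * ((∑ S : Finset (Fin n), D ^ #S * (n - #S)!) * exp (c + D) ^ (m + n)) := by
          simp only [sum_mul, mul_assoc]
      _ ≤ exp c * ((n ! * exp D) * exp (c + D) ^ (m + n)) := by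
          gcongr
          exact sum_pow_card_mul_factorial_le n hD
      _ = n ! * exp (c + D) ^ (m + 1 + n) := by
          rw [exp_add]
          ring
termination_by m + n
decreasing_by
  have := S.card_add_card_compl
  rw [Fintype.card_fin] at this
  omega

end Recurrence

theorem stmt_14_general (d : ℕ) (c : ℝ) :
    ∃ q₁ : ℝ, 0 < q₁ ∧
      ∀ (g : EuclideanSpace ℝ (Fin d) → ℝ)
        (phiT : ∀ m : ℕ, (Fin m → EuclideanSpace ℝ (Fin d)) →
          ∀ n : ℕ, (Fin n → EuclideanSpace ℝ (Fin d)) → ℝ),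
        (∀ x, g (-x) = g x) →
        (∀ x, 1 ≤ ‖x‖ → -c ≤ g x) →
        (∀ x, ‖x‖ < 1 → g x = -1) →
        (∀ X : Finset (EuclideanSpace ℝ (Fin d)),
          (∀ x ∈ X, 1 ≤ ‖x‖) → (∀ x ∈ X, ∀ y ∈ X, x ≠ y → 1 ≤ dist x y) →
          ∑ x ∈ X, |g x| ≤ c) →
        (∀ (X : Fin 0 → EuclideanSpace ℝ (Fin d)) (n : ℕ)
            (Y : Fin n → EuclideanSpace ℝ (Fin d)),
          phiT 0 X n Y = if n = 0 then 1 else 0) →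
        (∀ (m : ℕ) (X : Fin (m + 1) → EuclideanSpace ℝ (Fin d)) (n : ℕ)
            (Y : Fin n → EuclideanSpace ℝ (Fin d)),
          phiT (m + 1) X n Y =
            (∏ i : Fin m, (g (X i.succ - X 0) + 1)) *
              ∑ S : Finset (Fin n),
                (∏ j ∈ S, g (Y j - X 0)) *
                  phiT (S.card + m) (Fin.append (subseqVals Y S) (Fin.tail X))
                    Sᶜ.card (subseqVals Y Sᶜ)) →
        ∀ (m n : ℕ) (x : Fin m → EuclideanSpace ℝ (Fin d))
          (Y : Fin n → Finset (EuclideanSpace ℝ (Fin d))),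
          (∀ j, ∀ u ∈ Y j, ∀ v ∈ Y j, u ≠ v → 1 ≤ dist u v) →
          ∑ y ∈ Fintype.piFinset Y, |phiT m x n y| ≤ n.factorial * q₁ ^ (m + n) := by
  obtain ⟨N, hN⟩ := exists_card_filter_dist_lt_le (E := EuclideanSpace ℝ (Fin d))
  refine ⟨exp (c + (N + c)), exp_pos _, fun g phiT _ _ hball hsum h0 hrec m n x Y hY => ?_⟩
  replace hsum (X : Finset (EuclideanSpace ℝ (Fin d))) (hX : ∀ x ∈ X, 1 ≤ ‖x‖)
      (hsep : (X : Set (EuclideanSpace ℝ (Fin d))).Pairwise (1 ≤ dist · ·)) :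
      ∑ x ∈ X, |g x| ≤ c :=
    hsum X hX fun x hx y hy => hsep hx hy
  have hc : 0 ≤ c := by simpa using hsum ∅
  exact IsPhiTilde.sum_abs_le ⟨h0, hrec⟩ hball hsum (by positivity) x Y fun j =>
    sum_abs_comp_sub_le hball hsum hN fun u hu v hv => hY j u hu v hv

/-- there is a constant `q₁` depending only on `c` and the dimension
such that, for any `g` satisfying the hard-core assumptions with `a = c < 1`
(`g` even, `g ≥ -c` off the unit ball, `g = -1` on it, `∑_{x∈X}|g x| ≤ c`
for `X ∈ C₀`) and `φ̃` the family of functions determined by the recurrence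
`φ̃_X(Y) = ∏_{i≥2}(g(xᵢ-x₁)+1) ∑_{Z⊆Y} ∏_j g(zⱼ-x₁) · φ̃_{Z∪(X\x₁)}(Y\Z)`
(with `φ̃_∅ = 𝟏`), one has
`r(m,n) = sup_X sup_{Y₁,…,Yₙ∈C} ∑_{y₁∈Y₁}⋯∑_{yₙ∈Yₙ} |φ̃_X(y)| ≤ n!·q₁^{m+n}`. -/
theorem stmt_14 (d : ℕ) (c : ℝ) (hc0 : 0 ≤ c) (hc : c < 1) :
    ∃ q₁ : ℝ, 0 < q₁ ∧
      ∀ (g : EuclideanSpace ℝ (Fin d) → ℝ)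
        (phiT : ∀ m : ℕ, (Fin m → EuclideanSpace ℝ (Fin d)) →
          ∀ n : ℕ, (Fin n → EuclideanSpace ℝ (Fin d)) → ℝ),
        (∀ x, g (-x) = g x) →
        (∀ x, 1 ≤ ‖x‖ → -c ≤ g x) →
        (∀ x, ‖x‖ < 1 → g x = -1) →
        (∀ X : Finset (EuclideanSpace ℝ (Fin d)),
          (∀ x ∈ X, 1 ≤ ‖x‖) → (∀ x ∈ X, ∀ y ∈ X, x ≠ y → 1 ≤ dist x y) →
          ∑ x ∈ X, |g x| ≤ c) →
        (∀ (X : Fin 0 → EuclideanSpace ℝ (Fin d)) (n : ℕ)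
            (Y : Fin n → EuclideanSpace ℝ (Fin d)),
          phiT 0 X n Y = if n = 0 then 1 else 0) →
        (∀ (m : ℕ) (X : Fin (m + 1) → EuclideanSpace ℝ (Fin d)) (n : ℕ)
            (Y : Fin n → EuclideanSpace ℝ (Fin d)),
          phiT (m + 1) X n Y =
            (∏ i : Fin m, (g (X i.succ - X 0) + 1)) *
              ∑ S : Finset (Fin n),
                (∏ j ∈ S, g (Y j - X 0)) *
                  phiT (S.card + m) (Fin.append (subseqVals Y S) (Fin.tail X))
                    Sᶜ.card (subseqVals Y Sᶜ)) →
        ∀ (m n : ℕ) (x : Fin m → EuclideanSpace ℝ (Fin d))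
          (Y : Fin n → Finset (EuclideanSpace ℝ (Fin d))),
          (∀ j, ∀ u ∈ Y j, ∀ v ∈ Y j, u ≠ v → 1 ≤ dist u v) →
          ∑ y ∈ Fintype.piFinset Y, |phiT m x n y| ≤ n.factorial * q₁ ^ (m + n) :=
  stmt_14_general d c

end
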